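/- Let $d \geq 1$, $\kappa \in (2,d)$, and let $R : \mathbb{R}^d \to \mathbb{R}$ satisfy $0 \le R(x) \le C(1+|x|)^{-\kappa}$. Let $P_t(x) = (2\pi t)^{-d/2} e^{-|x|^2/(2t)}$ be the heat kernel. Then there is a constant $C' > 0$ such that for all $t > 0$ and $x \in \mathbb{R}^d$, $\int_{\mathbb{R}^d} P_t(x-z) R(z)\,dz \le C' (1+|x|+\sqrt{t})^{-\kappa}$. -/

import Mathlib

/-!
Dominate `R` by `C (1 + ‖z‖) ^ (-κ)` and put `a = 1 + ‖x‖ + √t`. Since the heat kernel has mass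
one, the case `a < 4` is trivial. For `a ≥ 4` split the integral at `‖z‖ = a / 4`. Outside the
ball the weight is at most `(a / 4) ^ (-κ)`. Inside it `√t + ‖x - z‖ ≥ a / 2`, so the Gaussian
bound `P_t(y) ≲ (√t + ‖y‖) ^ (-d)` gives `P_t(x - z) ≲ a ^ (-d)`, while scaling gives
`∫_{‖z‖ < ρ} (1 + ‖z‖) ^ (-κ) ≲ ρ ^ (d - κ)`, finite because `κ < d`. Both pieces are `≲ a ^ (-κ)`.
-/

open MeasureTheory Real Set Metric

noncomputable def heatKernel (d : ℕ) (t : ℝ) (x : EuclideanSpace ℝ (Fin d)) : ℝ :=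
  (2 * Real.pi * t) ^ (-(d : ℝ) / 2) * Real.exp (-‖x‖ ^ 2 / (2 * t))

theorem integral_mul_le_of_le_on_of_le_on_compl {α : Type*} [MeasurableSpace α] {μ : Measure α}
    {f g : α → ℝ} {s : Set α} {M G : ℝ} (hs : MeasurableSet s) (hf : 0 ≤ f) (hG : 0 ≤ G)
    (hf_int : Integrable f μ) (hfg_int : Integrable (fun z ↦ f z * g z) μ)
    (hg_int : IntegrableOn g s μ) (hg : ∀ z ∈ s, 0 ≤ g z) (hfM : ∀ z ∈ s, f z ≤ M)
    (hgG : ∀ z ∉ s, g z ≤ G) :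
    ∫ z, f z * g z ∂μ ≤ M * ∫ z in s, g z ∂μ + G * ∫ z, f z ∂μ := by
  rw [← integral_add_compl hs hfg_int]
  gcongr
  · rw [← integral_const_mul]
    exact setIntegral_mono_on hfg_int.integrableOn (hg_int.const_mul M) hs
      fun z hz ↦ mul_le_mul_of_nonneg_right (hfM z hz) (hg z hz)
  · calc ∫ z in sᶜ, f z * g z ∂μ ≤ ∫ z in sᶜ, G * f z ∂μ :=
          setIntegral_mono_on hfg_int.integrableOn (hf_int.const_mul G).integrableOn hs.compl
            fun z hz ↦ (mul_comm _ _).trans_le (mul_le_mul_of_nonneg_right (hgG z hz) (hf z))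
      _ ≤ G * ∫ z, f z ∂μ := by
          rw [integral_const_mul]
          exact mul_le_mul_of_nonneg_left (setIntegral_le_integral hf_int (.of_forall hf)) hG

section Scaling

variable {E : Type*} [NormedAddCommGroup E] [NormedSpace ℝ E] [FiniteDimensional ℝ E]
  [MeasurableSpace E] [BorelSpace E] (μ : Measure E) [μ.IsAddHaarMeasure]

theorem setIntegral_ball_norm_rpow {ρ : ℝ} (hρ : 0 < ρ) (s : ℝ) :
    ∫ z in ball (0 : E) ρ, ‖z‖ ^ s ∂μ =
      ρ ^ (Module.finrank ℝ E + s) * ∫ z in ball (0 : E) 1, ‖z‖ ^ s ∂μ := by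
  have h := Measure.setIntegral_comp_smul_of_pos μ (fun z : E ↦ ‖z‖ ^ s) (ball 0 1) hρ
  rw [smul_unitBall_of_pos hρ] at h
  simp only [norm_smul, Real.norm_of_nonneg hρ.le, mul_rpow hρ.le (norm_nonneg _),
    integral_const_mul, smul_eq_mul] at h
  rw [rpow_add hρ, rpow_natCast, mul_assoc, h, ← mul_assoc, mul_inv_cancel₀ (by positivity),
    one_mul]

theorem exists_setIntegral_ball_one_add_norm_rpow_neg_le {κ : ℝ} (hκ : 0 < κ)
    (hκd : κ < Module.finrank ℝ E) :
    ∃ I ≥ 0, ∀ ρ > 0,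
      ∫ z in ball (0 : E) ρ, (1 + ‖z‖) ^ (-κ) ∂μ ≤ I * ρ ^ (Module.finrank ℝ E - κ) := by
  have hd : 0 < Module.finrank ℝ E := by exact_mod_cast hκ.trans hκd
  have : Nontrivial E := Module.nontrivial_of_finrank_pos hd
  refine ⟨∫ z in ball (0 : E) 1, ‖z‖ ^ (-κ) ∂μ,
    setIntegral_nonneg measurableSet_ball fun z _ ↦ by positivity, fun ρ hρ ↦ ?_⟩
  have h_int : IntegrableOn (fun z : E ↦ ‖z‖ ^ (-κ)) (ball 0 ρ) μ :=
    integrableOn_ball_of_norm_le_rpow hd hκd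
      (.of_forall fun z ↦ by rw [one_mul, norm_of_nonneg (by positivity)])
      (measurable_norm.pow_const _).aestronglyMeasurable
  calc ∫ z in ball (0 : E) ρ, (1 + ‖z‖) ^ (-κ) ∂μ
      ≤ ∫ z in ball (0 : E) ρ, ‖z‖ ^ (-κ) ∂μ := by
        refine integral_mono_of_nonneg (.of_forall fun z ↦ by positivity) h_int ?_
        filter_upwards [ae_restrict_of_ae (Measure.ae_ne μ 0)] with z hz
        exact rpow_le_rpow_of_nonpos (norm_pos_iff.2 hz) (by linarith) (by linarith)
    _ = _ := by rw [setIntegral_ball_norm_rpow μ hρ, mul_comm, ← sub_eq_add_neg]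

end Scaling

section HeatKernel

variable {d : ℕ} {t : ℝ}

theorem heatKernel_nonneg (ht : 0 ≤ t) (x : EuclideanSpace ℝ (Fin d)) :
    0 ≤ heatKernel d t x := by
  unfold heatKernel
  positivity

theorem integral_heatKernel (ht : 0 < t) : ∫ x, heatKernel d t x = 1 := by
  have h := GaussianFourier.integral_rexp_neg_mul_sq_norm (V := EuclideanSpace ℝ (Fin d))
    (inv_pos.2 (mul_pos two_pos ht))
  rw [finrank_euclideanSpace_fin, div_inv_eq_mul, ← mul_assoc, mul_comm π] at h
  simp only [heatKernel, integral_const_mul, neg_div, div_eq_inv_mul (‖_‖ ^ 2), ← neg_mul, h]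
  rw [← rpow_add (by positivity), neg_add_cancel, rpow_zero]

theorem integrable_heatKernel (ht : 0 < t) : Integrable (heatKernel d t) :=
  .of_integral_ne_zero (by rw [integral_heatKernel ht]; exact one_ne_zero)

theorem heatKernel_le_div_pow (ht : 0 < t) (x : EuclideanSpace ℝ (Fin d)) :
    heatKernel d t x ≤ (2 * π) ^ (-(d : ℝ) / 2) * exp 2 * d.factorial / (√t + ‖x‖) ^ d := by
  have hu : 0 < √t := sqrt_pos.2 ht
  set s := ‖x‖ ^ 2 / (2 * t)
  have h_prefactor : (2 * π * t) ^ (-(d : ℝ) / 2) = (2 * π) ^ (-(d : ℝ) / 2) / √t ^ d := by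
    rw [mul_rpow (by positivity) ht.le, div_eq_mul_inv]
    congr 1
    rw [sqrt_eq_rpow, ← rpow_natCast, ← rpow_mul ht.le, ← rpow_neg ht.le]
    ring_nf
  -- Gaussian decay beats the polynomial through `y ^ d ≤ d! * exp y` at `y = 2 + s`.
  have h_sum : √t + ‖x‖ ≤ √t * (2 + s) := by
    have h_diff : √t * (2 + s) - (√t + ‖x‖) = ((√t - ‖x‖) ^ 2 + √t ^ 2) / (2 * √t) := by
      rw [show s = ‖x‖ ^ 2 / (2 * √t ^ 2) by rw [sq_sqrt ht.le]]
      field_simp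
      ring
    rw [← sub_nonneg, h_diff]
    positivity
  have h_pow : (√t + ‖x‖) ^ d ≤ √t ^ d * (d.factorial * exp (2 + s)) := by
    have h_exp := pow_div_factorial_le_exp (x := 2 + s) (by positivity) d
    rw [div_le_iff₀ (by positivity), mul_comm] at h_exp
    calc (√t + ‖x‖) ^ d ≤ (√t * (2 + s)) ^ d := by gcongr
      _ ≤ √t ^ d * (d.factorial * exp (2 + s)) := by rw [mul_pow]; gcongr
  rw [le_div_iff₀ (by positivity), heatKernel, h_prefactor, neg_div (2 * t)]
  calc (2 * π) ^ (-(d : ℝ) / 2) / √t ^ d * exp (-s) * (√t + ‖x‖) ^ d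
      ≤ (2 * π) ^ (-(d : ℝ) / 2) / √t ^ d * exp (-s) *
          (√t ^ d * (d.factorial * exp (2 + s))) := by gcongr
    _ = (2 * π) ^ (-(d : ℝ) / 2) * exp 2 * d.factorial := by
        rw [exp_add]
        field_simp
        rw [← exp_add, neg_add_cancel, exp_zero]

theorem integral_heatKernel_sub (ht : 0 < t) (x : EuclideanSpace ℝ (Fin d)) :
    ∫ z, heatKernel d t (x - z) = 1 := by
  rw [integral_sub_left_eq_self (heatKernel d t), integral_heatKernel ht]

theorem integrable_heatKernel_sub_mul_one_add_norm_rpow_neg (ht : 0 < t)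
    (x : EuclideanSpace ℝ (Fin d)) {κ : ℝ} (hκ : 0 ≤ κ) :
    Integrable fun z ↦ heatKernel d t (x - z) * (1 + ‖z‖) ^ (-κ) :=
  ((integrable_heatKernel ht).comp_sub_left x).mul_bdd
    ((measurable_norm.const_add 1).pow_const _).aestronglyMeasurable (c := 1)
    (.of_forall fun z ↦ by
      rw [norm_of_nonneg (by positivity)]
      exact rpow_le_one_of_one_le_of_nonpos (by simp) (by linarith))

theorem integral_heatKernel_sub_mul_one_add_norm_rpow_neg_le_one (ht : 0 < t)
    (x : EuclideanSpace ℝ (Fin d)) {κ : ℝ} (hκ : 0 ≤ κ) :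
    ∫ z, heatKernel d t (x - z) * (1 + ‖z‖) ^ (-κ) ≤ 1 := by
  calc ∫ z, heatKernel d t (x - z) * (1 + ‖z‖) ^ (-κ) ≤ ∫ z, heatKernel d t (x - z) :=
        integral_mono_of_nonneg
          (.of_forall fun z ↦ mul_nonneg (heatKernel_nonneg ht.le _) (by positivity))
          ((integrable_heatKernel ht).comp_sub_left x)
          (.of_forall fun z ↦ mul_le_of_le_one_right (heatKernel_nonneg ht.le _)
            (rpow_le_one_of_one_le_of_nonpos (by simp) (by linarith)))
    _ = 1 := integral_heatKernel_sub ht x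

theorem integral_heatKernel_sub_mul_one_add_norm_rpow_neg_le_of_four_le (ht : 0 < t)
    (x : EuclideanSpace ℝ (Fin d)) {κ I : ℝ} (hκ : 0 ≤ κ) (hI0 : 0 ≤ I)
    (hI : ∀ ρ > 0, ∫ z in ball (0 : EuclideanSpace ℝ (Fin d)) ρ, (1 + ‖z‖) ^ (-κ) ≤
      I * ρ ^ ((d : ℝ) - κ))
    (ha : 4 ≤ 1 + ‖x‖ + √t) :
    ∫ z, heatKernel d t (x - z) * (1 + ‖z‖) ^ (-κ) ≤
      ((2 * π) ^ (-(d : ℝ) / 2) * exp 2 * d.factorial * I + 1) *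
        ((1 + ‖x‖ + √t) / 4) ^ (-κ) := by
  set K := (2 * π) ^ (-(d : ℝ) / 2) * exp 2 * d.factorial
  set a := 1 + ‖x‖ + √t
  set B := ball (0 : EuclideanSpace ℝ (Fin d)) (a / 4)
  have h_near : ∀ z ∈ B, heatKernel d t (x - z) ≤ K / (a / 2) ^ d := by
    intro z hz
    rw [mem_ball_zero_iff] at hz
    have : a / 2 ≤ √t + ‖x - z‖ := by have := norm_sub_norm_le x z; linarith
    calc heatKernel d t (x - z) ≤ K / (√t + ‖x - z‖) ^ d := heatKernel_le_div_pow ht _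
      _ ≤ K / (a / 2) ^ d := by gcongr
  have h_far : ∀ z ∉ B, (1 + ‖z‖) ^ (-κ) ≤ (a / 4) ^ (-κ) := by
    intro z hz
    rw [mem_ball_zero_iff, not_lt] at hz
    exact rpow_le_rpow_of_nonpos (by positivity) (by linarith) (by linarith)
  have h_ratio : K / (a / 2) ^ d * (a / 4) ^ d ≤ K := by
    rw [div_mul_eq_mul_div, div_le_iff₀ (by positivity)]
    gcongr
    linarith
  have hw_int : IntegrableOn (fun z ↦ (1 + ‖z‖) ^ (-κ)) B :=
    ((Continuous.rpow_const (by fun_prop) fun z ↦ .inl (by positivity)).continuousOn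
      |>.integrableOn_compact (isCompact_closedBall 0 _)).mono_set ball_subset_closedBall
  calc ∫ z, heatKernel d t (x - z) * (1 + ‖z‖) ^ (-κ)
      ≤ K / (a / 2) ^ d * (∫ z in B, (1 + ‖z‖) ^ (-κ)) +
          (a / 4) ^ (-κ) * ∫ z, heatKernel d t (x - z) :=
        integral_mul_le_of_le_on_of_le_on_compl measurableSet_ball
          (fun z ↦ heatKernel_nonneg ht.le _) (by positivity)
          ((integrable_heatKernel ht).comp_sub_left x)
          (integrable_heatKernel_sub_mul_one_add_norm_rpow_neg ht x hκ) hw_int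
          (fun z _ ↦ by positivity) h_near h_far
    _ ≤ K / (a / 2) ^ d * (I * ((a / 4) ^ d * (a / 4) ^ (-κ))) + (a / 4) ^ (-κ) := by
        rw [integral_heatKernel_sub ht x, mul_one, ← rpow_natCast (a / 4),
          ← rpow_add (by positivity), ← sub_eq_add_neg]
        gcongr
        exact hI _ (by positivity)
    _ = K / (a / 2) ^ d * (a / 4) ^ d * I * (a / 4) ^ (-κ) + (a / 4) ^ (-κ) := by ring
    _ ≤ K * I * (a / 4) ^ (-κ) + (a / 4) ^ (-κ) := by gcongr
    _ = (K * I + 1) * (a / 4) ^ (-κ) := by ring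

theorem exists_integral_heatKernel_sub_mul_one_add_norm_rpow_neg_le {κ : ℝ} (hκ : 0 < κ)
    (hκd : κ < d) :
    ∃ A > 0, ∀ t > 0, ∀ x : EuclideanSpace ℝ (Fin d),
      ∫ z, heatKernel d t (x - z) * (1 + ‖z‖) ^ (-κ) ≤ A * (1 + ‖x‖ + √t) ^ (-κ) := by
  obtain ⟨I, hI0, hI⟩ := exists_setIntegral_ball_one_add_norm_rpow_neg_le
    (volume : Measure (EuclideanSpace ℝ (Fin d))) hκ (by rwa [finrank_euclideanSpace_fin])
  rw [finrank_euclideanSpace_fin] at hI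
  set K := (2 * π) ^ (-(d : ℝ) / 2) * exp 2 * d.factorial
  have hKI : 0 ≤ K * I := mul_nonneg (by positivity) hI0
  refine ⟨(K * I + 1) * 4 ^ κ, by positivity, fun t ht x ↦ ?_⟩
  set a := 1 + ‖x‖ + √t
  have h_scale : (a / 4) ^ (-κ) = 4 ^ κ * a ^ (-κ) := by
    rw [div_rpow (by positivity) (by norm_num), rpow_neg (by norm_num : (0 : ℝ) ≤ 4),
      div_inv_eq_mul, mul_comm]
  rw [mul_assoc, ← h_scale]
  rcases lt_or_ge a 4 with ha | ha
  · calc ∫ z, heatKernel d t (x - z) * (1 + ‖z‖) ^ (-κ) ≤ 1 :=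
          integral_heatKernel_sub_mul_one_add_norm_rpow_neg_le_one ht x hκ.le
      _ ≤ (a / 4) ^ (-κ) :=
          one_le_rpow_of_pos_of_le_one_of_nonpos (by positivity) (by linarith) (by linarith)
      _ ≤ (K * I + 1) * (a / 4) ^ (-κ) :=
          le_mul_of_one_le_left (by positivity) (le_add_of_nonneg_left hKI)
  · exact integral_heatKernel_sub_mul_one_add_norm_rpow_neg_le_of_four_le ht x hκ.le hI0 hI ha

end HeatKernel

theorem stmt0_general (d : ℕ) (κ : ℝ) (hκ : 2 < κ ∧ κ < d)
    (R : EuclideanSpace ℝ (Fin d) → ℝ) (C : ℝ)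
    (hR : ∀ x, 0 ≤ R x ∧ R x ≤ C * (1 + ‖x‖) ^ (-κ)) :
    ∃ C' > 0, ∀ t > (0 : ℝ), ∀ x : EuclideanSpace ℝ (Fin d),
      (∫ z, heatKernel d t (x - z) * R z) ≤ C' * (1 + ‖x‖ + Real.sqrt t) ^ (-κ) := by
  have hκ0 : 0 < κ := by linarith [hκ.1]
  obtain ⟨A, hA0, hA⟩ := exists_integral_heatKernel_sub_mul_one_add_norm_rpow_neg_le hκ0 hκ.2
  have hC : 0 ≤ C := by simpa using (hR 0).1.trans (hR 0).2
  refine ⟨C * A + 1, by positivity, fun t ht x ↦ ?_⟩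
  have hP z : 0 ≤ heatKernel d t (x - z) := heatKernel_nonneg ht.le _
  calc ∫ z, heatKernel d t (x - z) * R z
      ≤ ∫ z, C * (heatKernel d t (x - z) * (1 + ‖z‖) ^ (-κ)) :=
        integral_mono_of_nonneg (.of_forall fun z ↦ mul_nonneg (hP z) (hR z).1)
          ((integrable_heatKernel_sub_mul_one_add_norm_rpow_neg ht x hκ0.le).const_mul C)
          (.of_forall fun z ↦ (mul_le_mul_of_nonneg_left (hR z).2 (hP z)).trans_eq
            (mul_left_comm _ _ _))
    _ ≤ C * (A * (1 + ‖x‖ + √t) ^ (-κ)) := by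
        rw [integral_const_mul]
        exact mul_le_mul_of_nonneg_left (hA t ht x) hC
    _ ≤ (C * A + 1) * (1 + ‖x‖ + √t) ^ (-κ) := by
        rw [← mul_assoc]
        exact mul_le_mul_of_nonneg_right (le_add_of_nonneg_right zero_le_one) (by positivity)

theorem stmt0 (d : ℕ) (hd : 1 ≤ d) (κ : ℝ) (hκ : 2 < κ ∧ κ < d)
    (R : EuclideanSpace ℝ (Fin d) → ℝ) (C : ℝ)
    (hR : ∀ x, 0 ≤ R x ∧ R x ≤ C * (1 + ‖x‖) ^ (-κ)) :
    ∃ C' > 0, ∀ t > (0 : ℝ), ∀ x : EuclideanSpace ℝ (Fin d),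
      (∫ z, heatKernel d t (x - z) * R z) ≤ C' * (1 + ‖x‖ + Real.sqrt t) ^ (-κ) :=
  stmt0_general d κ hκ R C hR
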